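/- Let U and V be unitary operators on a complex Hilbert space H, let m > 0 be a real number, and let X be a bounded operator such that X − mI is positive. Then m‖U − V‖ ≤ w(S) ≤ ‖UX − XV‖, where S is the operator on H ⊕ H given by the 2×2 operator matrix with zero diagonal entries, (1,2)-entry UX − XV, and (2,1)-entry U*X − XV*, and w denotes the numerical radius. -/

import Mathlib

/-!
Upper bound: for a unit vector `z = (a, b)`, `|⟪S z, z⟫| ≤ (‖C‖ + ‖D‖) ‖a‖ ‖b‖ ≤ (‖C‖ + ‖D‖) / 2`,
and `D = -U* C V*` has the same norm as `C`.

Lower bound: the real part of `⟪S (a, b), (a, b)⟫` is `re ⟪(C + D*) b, a⟫`, so `‖C + D*‖ ≤ 2 w(S)`,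
and `C + D* = T X + X T` for `T = U - V` because `X` is self-adjoint. The operator `U* T = 1 - U* V`
is normal, so some `μ` in its spectrum has `|μ| = ‖T‖`, and `μ` is an approximate eigenvalue of
`U* T` with `μ̄` an approximate eigenvalue of its adjoint along the same vectors. For such a unit
vector `x`, `⟪(T X + X T) x, U x⟫ ≈ μ̄ (⟪X x, x⟫ + ⟪X U x, U x⟫)`, of modulus at least `2 m |μ|`.
-/

/-- The numerical radius of a bounded linear operator. -/
noncomputable def numRadius {E : Type*} [NormedAddCommGroup E] [InnerProductSpace ℂ E]
    (T : E →L[ℂ] E) : ℝ :=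
  ⨆ x : {x : E // ‖x‖ = 1}, ‖(inner ℂ (T x.val) x.val : ℂ)‖

/-- The 2×2 operator matrix `[[0, C],[D, 0]]` acting on `H ⊕ H` (as `WithLp 2 (H × H)`)
by `(x, y) ↦ (C y, D x)`. -/
noncomputable def offDiagOp {H : Type*} [NormedAddCommGroup H] [InnerProductSpace ℂ H]
    (C D : H →L[ℂ] H) : WithLp 2 (H × H) →L[ℂ] WithLp 2 (H × H) :=
  ((WithLp.prodContinuousLinearEquiv 2 ℂ H H).symm : (H × H) →L[ℂ] WithLp 2 (H × H)) ∘L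
    ((C ∘L ContinuousLinearMap.snd ℂ H H).prod (D ∘L ContinuousLinearMap.fst ℂ H H)) ∘L
    ((WithLp.prodContinuousLinearEquiv 2 ℂ H H) : WithLp 2 (H × H) →L[ℂ] (H × H))

open ContinuousLinearMap

local notation "⟪" x ", " y "⟫" => inner ℂ x y

section NumRadius

variable {E : Type*} [NormedAddCommGroup E] [InnerProductSpace ℂ E] (T : E →L[ℂ] E)

lemma numRadius_nonneg : 0 ≤ numRadius T :=
  Real.iSup_nonneg fun _ => norm_nonneg _

lemma norm_inner_apply_self_le_numRadius {x : E} (hx : ‖x‖ = 1) : ‖⟪T x, x⟫‖ ≤ numRadius T := by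
  refine le_ciSup (f := fun x : {x : E // ‖x‖ = 1} => ‖⟪T x, x⟫‖) ⟨‖T‖, ?_⟩ ⟨x, hx⟩
  rintro _ ⟨y, rfl⟩
  calc ‖⟪T y, y⟫‖ ≤ ‖T y‖ * ‖(y : E)‖ := norm_inner_le_norm _ _
    _ ≤ ‖T‖ * ‖(y : E)‖ * ‖(y : E)‖ := by gcongr; exact T.le_opNorm _
    _ = ‖T‖ := by rw [y.2]; ring

lemma norm_inner_apply_self_le_numRadius_mul_sq (x : E) :
    ‖⟪T x, x⟫‖ ≤ numRadius T * ‖x‖ ^ 2 := by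
  rcases eq_or_ne x 0 with rfl | hx
  · simp
  set u := (‖x‖⁻¹ : ℂ) • x
  have hu : ‖u‖ = 1 := by simp [u, norm_smul, norm_ne_zero_iff.mpr hx]
  have hxu : x = (‖x‖ : ℂ) • u := by simp [u, smul_smul, norm_ne_zero_iff.mpr hx]
  have : ‖⟪T x, x⟫‖ = ‖⟪T u, u⟫‖ * ‖x‖ ^ 2 := by
    conv_lhs => rw [hxu, map_smul, inner_smul_left, inner_smul_right]
    simp; ring
  rw [this]
  exact mul_le_mul_of_nonneg_right (norm_inner_apply_self_le_numRadius T hu) (sq_nonneg _)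

lemma numRadius_le {M : ℝ} (hM : 0 ≤ M) (h : ∀ x : E, ‖x‖ = 1 → ‖⟪T x, x⟫‖ ≤ M) :
    numRadius T ≤ M :=
  Real.iSup_le (fun x => h x.1 x.2) hM

end NumRadius

section OffDiag

variable {H : Type*} [NormedAddCommGroup H] [InnerProductSpace ℂ H] (C D : H →L[ℂ] H)

lemma inner_offDiagOp_apply_self (z : WithLp 2 (H × H)) :
    ⟪offDiagOp C D z, z⟫ = ⟪C z.snd, z.fst⟫ + ⟪D z.fst, z.snd⟫ := by
  simp [offDiagOp, WithLp.prod_inner_apply]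

lemma numRadius_offDiagOp_le : numRadius (offDiagOp C D) ≤ (‖C‖ + ‖D‖) / 2 := by
  refine numRadius_le _ (by positivity) fun z hz => ?_
  have hz2 : ‖z.fst‖ ^ 2 + ‖z.snd‖ ^ 2 = 1 := by rw [← WithLp.prod_norm_sq_eq_of_L2, hz, one_pow]
  calc ‖⟪offDiagOp C D z, z⟫‖
      ≤ ‖⟪C z.snd, z.fst⟫‖ + ‖⟪D z.fst, z.snd⟫‖ := by
        rw [inner_offDiagOp_apply_self]; exact norm_add_le _ _
    _ ≤ ‖C z.snd‖ * ‖z.fst‖ + ‖D z.fst‖ * ‖z.snd‖ := by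
        gcongr <;> exact norm_inner_le_norm _ _
    _ ≤ ‖C‖ * ‖z.snd‖ * ‖z.fst‖ + ‖D‖ * ‖z.fst‖ * ‖z.snd‖ := by
        gcongr <;> exact le_opNorm _ _
    _ = (‖C‖ + ‖D‖) * (‖z.fst‖ * ‖z.snd‖) := by ring
    _ ≤ (‖C‖ + ‖D‖) / 2 := by
        nlinarith [sq_nonneg (‖z.fst‖ - ‖z.snd‖), norm_nonneg C, norm_nonneg D]

variable [CompleteSpace H]

lemma re_inner_add_adjoint_apply_le_numRadius_offDiagOp (a b : H) :
    RCLike.re ⟪(C + adjoint D) b, a⟫ ≤ numRadius (offDiagOp C D) * (‖a‖ ^ 2 + ‖b‖ ^ 2) := by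
  set z : WithLp 2 (H × H) := WithLp.toLp 2 (a, b)
  have hz : ‖z‖ ^ 2 = ‖a‖ ^ 2 + ‖b‖ ^ 2 := WithLp.prod_norm_sq_eq_of_L2 z
  have hre : RCLike.re ⟪(C + adjoint D) b, a⟫ = RCLike.re ⟪offDiagOp C D z, z⟫ := by
    rw [inner_offDiagOp_apply_self, add_apply, inner_add_left, map_add, map_add,
      adjoint_inner_left, inner_re_symm b]
    rfl
  rw [hre, ← hz]
  exact (RCLike.re_le_norm _).trans (norm_inner_apply_self_le_numRadius_mul_sq _ z)

lemma norm_add_adjoint_le_two_mul_numRadius_offDiagOp :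
    ‖C + adjoint D‖ ≤ 2 * numRadius (offDiagOp C D) := by
  refine opNorm_le_bound _ (by have := numRadius_nonneg (offDiagOp C D); positivity) fun x => ?_
  have key := re_inner_add_adjoint_apply_le_numRadius_offDiagOp C D
    ((‖x‖ : ℂ) • (C + adjoint D) x) ((‖(C + adjoint D) x‖ : ℂ) • x)
  generalize hy : (C + adjoint D) x = y at key ⊢
  have hyy : (⟪y, y⟫).re = ‖y‖ ^ 2 := inner_self_eq_norm_sq (𝕜 := ℂ) y
  simp only [map_smul, hy, inner_smul_left, inner_smul_right, Complex.conj_ofReal,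
    RCLike.re_to_complex, Complex.re_ofReal_mul, hyy, norm_smul, Complex.norm_real, norm_norm] at key
  rcases (norm_nonneg y).eq_or_lt with hy0 | hy0
  · rw [← hy0]; have := numRadius_nonneg (offDiagOp C D); positivity
  have hx0 : 0 < ‖x‖ := norm_pos_iff.mpr fun hx => by simp [← hy, hx] at hy0
  have hxy : 0 < ‖x‖ * ‖y‖ := mul_pos hx0 hy0
  refine le_of_mul_le_mul_right (le_of_mul_le_mul_left ?_ hxy) hy0
  linear_combination key

end OffDiag

lemma IsStarNormal.sub_algebraMap {R A : Type*} [CommSemiring R] [StarRing R] [Ring A] [StarRing A]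
    [Algebra R A] [StarModule R A] (a : A) [IsStarNormal a] (r : R) :
    IsStarNormal (a - algebraMap R A r) := by
  have : IsStarNormal (algebraMap R A r) :=
    ⟨by rw [← algebraMap_star_comm]; exact Algebra.commute_algebraMap_left _ _⟩
  refine Commute.isStarNormal_sub ?_
  rw [← algebraMap_star_comm]
  exact Algebra.commute_algebraMap_right _ _

lemma IsStarNormal.exists_mem_spectrum_norm_eq {A : Type*} [CStarAlgebra A] [Nontrivial A] (a : A)
    [IsStarNormal a] : ∃ μ ∈ spectrum ℂ a, ‖μ‖ = ‖a‖ := by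
  obtain ⟨μ, hμ, h⟩ := spectrum.exists_nnnorm_eq_spectralRadius a
  rw [IsStarNormal.spectralRadius_eq_nnnorm, ENNReal.coe_inj] at h
  exact ⟨μ, hμ, congrArg NNReal.toReal h⟩

section CompleteSpace

variable {H : Type*} [NormedAddCommGroup H] [InnerProductSpace ℂ H] [CompleteSpace H]

lemma IsStarNormal.norm_adjoint_apply_sub_smul {N : H →L[ℂ] H} [IsStarNormal N] (μ : ℂ) (x : H) :
    ‖adjoint N x - (starRingEnd ℂ μ) • x‖ = ‖N x - μ • x‖ := by
  have := isStarNormal_iff_norm_eq_adjoint.mp (IsStarNormal.sub_algebraMap N μ) x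
  rw [← star_eq_adjoint] at this ⊢
  simpa [Algebra.algebraMap_eq_smul_one, star_sub, star_smul] using this.symm

lemma IsStarNormal.exists_norm_apply_sub_smul_lt {N : H →L[ℂ] H} [IsStarNormal N] {μ : ℂ}
    (hμ : μ ∈ spectrum ℂ N) {ε : ℝ} (hε : 0 < ε) : ∃ x : H, ‖x‖ = 1 ∧ ‖N x - μ • x‖ < ε := by
  -- Otherwise `N - μ` is bounded below; being normal, it then also has dense range, so it is
  -- invertible.
  by_contra! h
  set A := N - algebraMap ℂ _ μ
  have hA : ∀ x, A x = N x - μ • x := fun x => by simp [A, Algebra.algebraMap_eq_smul_one]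
  have hbound : ∀ x, ε * ‖x‖ ≤ ‖A x‖ := by
    intro x
    rcases eq_or_ne x 0 with rfl | hx
    · simp
    have hx' : 0 < ‖x‖ := norm_pos_iff.mpr hx
    have := h ((‖x‖⁻¹ : ℂ) • x) (by simp [norm_smul, hx'.ne'])
    rw [← hA, map_smul, norm_smul] at this
    simpa [hx'.ne', le_inv_mul_iff₀' hx', mul_comm] using this
  have hanti : AntilipschitzWith ⟨ε⁻¹, by positivity⟩ A :=
    A.antilipschitz_of_bound fun x => by
      show ‖x‖ ≤ ε⁻¹ * ‖A x‖
      rw [inv_mul_eq_div, le_div_iff₀ hε, mul_comm]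
      exact hbound x
  have hdense : (A : H →ₗ[ℂ] H).range.topologicalClosure = ⊤ := by
    rw [Submodule.topologicalClosure_eq_top_iff,
      (IsStarNormal.sub_algebraMap N μ).orthogonal_range, LinearMap.ker_eq_bot]
    exact hanti.injective
  apply spectrum.mem_iff.mp hμ
  rw [← neg_sub, IsUnit.neg_iff, isUnit_iff_bijective, bijective_iff_dense_range_and_antilipschitz]
  exact ⟨hdense, _, hanti⟩

end CompleteSpace

namespace ContinuousLinearMap

variable {H : Type*} [NormedAddCommGroup H] [InnerProductSpace ℂ H] {X : H →L[ℂ] H} {m : ℝ}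

lemma IsPositive.le_re_inner_of_sub_smul_one (hX : (X - (m : ℂ) • (1 : H →L[ℂ] H)).IsPositive)
    (x : H) : m * ‖x‖ ^ 2 ≤ RCLike.re ⟪X x, x⟫ := by
  have := hX.re_inner_nonneg_left x
  have hxx : (⟪x, x⟫).re = ‖x‖ ^ 2 := inner_self_eq_norm_sq (𝕜 := ℂ) x
  simp only [sub_apply, smul_apply, one_apply_eq_self, inner_sub_left, inner_smul_left,
    map_sub, Complex.conj_ofReal, RCLike.re_to_complex, Complex.re_ofReal_mul, hxx] at this ⊢
  linarith

variable [CompleteSpace H]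

lemma IsPositive.isSelfAdjoint_of_sub_smul_one
    (hX : (X - (m : ℂ) • (1 : H →L[ℂ] H)).IsPositive) : IsSelfAdjoint X := by
  have : IsSelfAdjoint ((m : ℂ) • (1 : H →L[ℂ] H)) := by simp [IsSelfAdjoint, star_smul]
  simpa using hX.isSelfAdjoint.add this

lemma sub_le_norm_inner_mul_add_mul_apply {T : H →L[ℂ] H} {δ : ℝ}
    (hX : (X - (m : ℂ) • (1 : H →L[ℂ] H)).IsPositive) {μ : ℂ} {x y : H} (hx : ‖x‖ = 1)
    (hy : ‖y‖ = 1) (hTx : ‖T x - μ • y‖ ≤ δ) (hTy : ‖adjoint T y - starRingEnd ℂ μ • x‖ ≤ δ) :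
    2 * m * ‖μ‖ - 2 * ‖X‖ * δ ≤ ‖⟪(T * X + X * T) x, y⟫‖ := by
  set r := T x - μ • y
  set s := adjoint T y - starRingEnd ℂ μ • x
  have hsplit : ⟪(T * X + X * T) x, y⟫ =
      starRingEnd ℂ μ * (⟪X x, x⟫ + ⟪X y, y⟫) + (⟪X x, s⟫ + ⟪X r, y⟫) := by
    have hTx' : T x = μ • y + r := by simp [r]
    have hTy' : adjoint T y = starRingEnd ℂ μ • x + s := by simp [s]
    rw [add_apply, mul_apply_eq_comp, mul_apply_eq_comp, inner_add_left,
      ← adjoint_inner_right, hTy', hTx', map_add, map_smul, inner_add_right, inner_add_left,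
      inner_smul_right, inner_smul_left]
    ring
  have hmain : 2 * m * ‖μ‖ ≤ ‖starRingEnd ℂ μ * (⟪X x, x⟫ + ⟪X y, y⟫)‖ := by
    have hre := add_le_add (hX.le_re_inner_of_sub_smul_one x) (hX.le_re_inner_of_sub_smul_one y)
    rw [hx, hy, ← map_add] at hre
    rw [norm_mul, RCLike.norm_conj]
    nlinarith [RCLike.re_le_norm (⟪X x, x⟫ + ⟪X y, y⟫), norm_nonneg μ]
  have herr : ‖⟪X x, s⟫ + ⟪X r, y⟫‖ ≤ 2 * ‖X‖ * δ := by
    have h1 : ‖⟪X x, s⟫‖ ≤ ‖X‖ * δ :=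
      calc ‖⟪X x, s⟫‖ ≤ ‖X x‖ * ‖s‖ := norm_inner_le_norm _ _
        _ ≤ ‖X‖ * ‖x‖ * δ := by gcongr; exact X.le_opNorm x
        _ = ‖X‖ * δ := by rw [hx, mul_one]
    have h2 : ‖⟪X r, y⟫‖ ≤ ‖X‖ * δ :=
      calc ‖⟪X r, y⟫‖ ≤ ‖X r‖ * ‖y‖ := norm_inner_le_norm _ _
        _ ≤ ‖X‖ * ‖r‖ := by rw [hy, mul_one]; exact X.le_opNorm r
        _ ≤ ‖X‖ * δ := by gcongr
    linarith [norm_add_le ⟪X x, s⟫ ⟪X r, y⟫]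
  rw [hsplit]
  linarith [norm_sub_le_norm_add (starRingEnd ℂ μ * (⟪X x, x⟫ + ⟪X y, y⟫)) (⟪X x, s⟫ + ⟪X r, y⟫)]

theorem two_mul_mul_norm_le_norm_mul_add_mul {U T : H →L[ℂ] H} (hU : U ∈ unitary (H →L[ℂ] H))
    [IsStarNormal (star U * T)] (hX : (X - (m : ℂ) • (1 : H →L[ℂ] H)).IsPositive) :
    2 * m * ‖T‖ ≤ ‖T * X + X * T‖ := by
  rcases subsingleton_or_nontrivial H with hH | hH
  · simp [Subsingleton.elim T 0]
  set N := star U * T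
  have hTN : T = U * N := by rw [← mul_assoc, Unitary.mul_star_self_of_mem hU, one_mul]
  have hNT : ‖N‖ = ‖T‖ := CStarRing.norm_mem_unitary_mul T (Unitary.star_mem hU)
  obtain ⟨μ, hμ, hμN⟩ := IsStarNormal.exists_mem_spectrum_norm_eq N
  refine le_of_forall_pos_le_add fun ε hε => ?_
  set δ := ε / (2 * ‖X‖ + 1)
  obtain ⟨x, hx, hNx⟩ := IsStarNormal.exists_norm_apply_sub_smul_lt hμ (by positivity : 0 < δ)
  have hUx : ‖U x‖ = 1 := by rw [norm_map_of_mem_unitary hU, hx]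
  have hTx : ‖T x - μ • U x‖ ≤ δ := by
    rw [hTN, mul_apply_eq_comp, ← map_smul, ← map_sub, norm_map_of_mem_unitary hU]
    exact hNx.le
  have hTy : ‖adjoint T (U x) - starRingEnd ℂ μ • x‖ ≤ δ := by
    have : adjoint T (U x) = adjoint N x := by
      rw [hTN, ← star_eq_adjoint, star_mul, mul_apply_eq_comp, ← mul_apply_eq_comp (star U),
        Unitary.star_mul_self_of_mem hU, one_apply_eq_self, star_eq_adjoint]
    rw [this, IsStarNormal.norm_adjoint_apply_sub_smul]
    exact hNx.le
  have hinner : ‖⟪(T * X + X * T) x, U x⟫‖ ≤ ‖T * X + X * T‖ := by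
    calc ‖⟪(T * X + X * T) x, U x⟫‖ ≤ ‖(T * X + X * T) x‖ * ‖U x‖ := norm_inner_le_norm _ _
      _ ≤ ‖T * X + X * T‖ := by
        rw [hUx, mul_one]; simpa [hx] using (T * X + X * T).le_opNorm x
  have hδ : 2 * ‖X‖ * δ ≤ ε := by
    rw [mul_div_assoc', div_le_iff₀ (by positivity)]
    nlinarith [norm_nonneg X]
  have := sub_le_norm_inner_mul_add_mul_apply hX hx hUx hTx hTy
  rw [← hNT, ← hμN]
  linarith

end ContinuousLinearMap

theorem stmt_12_general {H : Type*} [NormedAddCommGroup H] [InnerProductSpace ℂ H] [CompleteSpace H]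
    (U V X : H →L[ℂ] H)
    (hU : U ∈ unitary (H →L[ℂ] H)) (hV : V ∈ unitary (H →L[ℂ] H))
    (m : ℝ)
    (hX : (X - (m : ℂ) • (1 : H →L[ℂ] H)).IsPositive)
    (S : WithLp 2 (H × H) →L[ℂ] WithLp 2 (H × H))
    (hS : S = offDiagOp (U * X - X * V)
      (ContinuousLinearMap.adjoint U * X - X * ContinuousLinearMap.adjoint V)) :
    m * ‖U - V‖ ≤ numRadius S ∧ numRadius S ≤ ‖U * X - X * V‖ := by
  subst hS
  set C := U * X - X * V
  set D := adjoint U * X - X * adjoint V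
  have hCD : (U - V) * X + X * (U - V) = C + adjoint D := by
    simp only [C, D, ← star_eq_adjoint, star_sub, star_mul, star_star,
      hX.isSelfAdjoint_of_sub_smul_one.star_eq]
    noncomm_ring
  have hDC : D = -(star U * C * star V) := by
    simp only [C, D, ← star_eq_adjoint, mul_sub, sub_mul, ← mul_assoc,
      Unitary.star_mul_self_of_mem hU, one_mul]
    simp only [mul_assoc, Unitary.mul_star_self_of_mem hV, mul_one, neg_sub]
  have : IsStarNormal (star U * (U - V)) := by
    have := isStarNormal_of_mem_unitary (mul_mem (Unitary.star_mem hU) hV)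
    rw [mul_sub, Unitary.star_mul_self_of_mem hU]
    infer_instance
  constructor
  · have hlow := two_mul_mul_norm_le_norm_mul_add_mul hU hX (T := U - V)
    rw [hCD] at hlow
    linarith [norm_add_adjoint_le_two_mul_numRadius_offDiagOp C D]
  · have hD : ‖D‖ = ‖C‖ := by
      rw [hDC, norm_neg, CStarRing.norm_mul_mem_unitary _ (Unitary.star_mem hV),
        CStarRing.norm_mem_unitary_mul _ (Unitary.star_mem hU)]
    calc numRadius (offDiagOp C D) ≤ (‖C‖ + ‖D‖) / 2 := numRadius_offDiagOp_le C D
      _ = ‖C‖ := by rw [hD]; ring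

theorem stmt_12 {H : Type*} [NormedAddCommGroup H] [InnerProductSpace ℂ H] [CompleteSpace H]
    (U V X : H →L[ℂ] H)
    (hU : U ∈ unitary (H →L[ℂ] H)) (hV : V ∈ unitary (H →L[ℂ] H))
    (m : ℝ) (hm : 0 < m)
    (hX : (X - (m : ℂ) • (1 : H →L[ℂ] H)).IsPositive)
    (S : WithLp 2 (H × H) →L[ℂ] WithLp 2 (H × H))
    (hS : S = offDiagOp (U * X - X * V)
      (ContinuousLinearMap.adjoint U * X - X * ContinuousLinearMap.adjoint V)) :
    m * ‖U - V‖ ≤ numRadius S ∧ numRadius S ≤ ‖U * X - X * V‖ :=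
  stmt_12_general U V X hU hV m hX S hS
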